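/- Let x be a random vector in ℝⁿ with E[x] = 0 and E[x xᵀ] = σ²·I (where I is the n×n identity matrix and σ > 0), and let W be an m×n real matrix with rows W₁,…,Wₘ. Let Σ = E[(Wx − E[Wx])(Wx − E[Wx])ᵀ] be the covariance matrix of u = Wx, and let μ = max_{i≠j} |Wᵢᵀ Wⱼ| / (‖Wᵢ‖₂ ‖Wⱼ‖₂) be the coherence of the rows of W (assuming all rows are nonzero). Then min over α ∈ ℝᵐ of ‖Σ − diag(α)‖_F is at most σ² μ √( Σ_{i,j=1, i≠j}^{m} ‖Wᵢ‖₂² ‖Wⱼ‖₂² ), and the minimum is attained at α* given by αᵢ* = σ² ‖Wᵢ‖₂² for all i ∈ {1,…,m}. -/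
import Mathlib


open MeasureTheory Matrix

/-- The Frobenius norm of a real matrix. -/
noncomputable def frobNorm {m : ℕ} (A : Matrix (Fin m) (Fin m) ℝ) : ℝ :=
  Real.sqrt (∑ i, ∑ j, (A i j) ^ 2)

/-- The Euclidean norm of the `i`-th row of a matrix. -/
noncomputable def rowNorm {m n : ℕ} (W : Matrix (Fin m) (Fin n) ℝ) (i : Fin m) : ℝ :=
  Real.sqrt (∑ k, (W i k) ^ 2)

/-- Canonical Error Bound: Let `x` be a random vector in `ℝⁿ` with
`E[x] = 0` and `E[x xᵀ] = σ²·I` (`σ > 0`), let `W` be an `m×n` matrix with nonzero rows,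
let `S` be the covariance matrix of `u = Wx`, and let
`μ = max_{i≠j} |Wᵢᵀ Wⱼ|/(‖Wᵢ‖₂‖Wⱼ‖₂)` be the coherence of the rows of `W`. Then
`min_α ‖S − diag(α)‖_F ≤ σ² μ √(∑_{i≠j} ‖Wᵢ‖₂²‖Wⱼ‖₂²)`, and the minimum is attained
at `α*` with `αᵢ* = σ²‖Wᵢ‖₂²`. -/
theorem canonical_error_bound {Ω : Type*} [MeasureSpace Ω]
    [IsProbabilityMeasure (volume : Measure Ω)]
    {n m : ℕ} (x : Ω → Fin n → ℝ) (σ : ℝ) (hσ : 0 < σ)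
    (hmeas : ∀ j, Measurable fun ω => x ω j)
    (hint1 : ∀ j, Integrable fun ω => x ω j)
    (hint2 : ∀ j k, Integrable fun ω => x ω j * x ω k)
    (hmean : ∀ j, (∫ ω, x ω j) = 0)
    (hcov : ∀ j k, (∫ ω, x ω j * x ω k) = σ ^ 2 * (if j = k then 1 else 0))
    (W : Matrix (Fin m) (Fin n) ℝ) (hrows : ∀ i, W i ≠ 0)
    (u : Ω → Fin m → ℝ) (hu : ∀ ω, u ω = W.mulVec (x ω))
    (S : Matrix (Fin m) (Fin m) ℝ)
    (hS : ∀ i i', S i i' =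
      ∫ ω, (u ω i - ∫ ω', u ω' i) * (u ω i' - ∫ ω', u ω' i'))
    (μ : ℝ)
    (hμ : μ = sSup {r : ℝ | ∃ i j : Fin m, i ≠ j ∧
      r = |∑ k, W i k * W j k| / (rowNorm W i * rowNorm W j)})
    (αstar : Fin m → ℝ) (hαstar : ∀ i, αstar i = σ ^ 2 * rowNorm W i ^ 2) :
    (∀ α : Fin m → ℝ,
        frobNorm (S - Matrix.diagonal αstar) ≤ frobNorm (S - Matrix.diagonal α)) ∧
      frobNorm (S - Matrix.diagonal αstar) ≤
        σ ^ 2 * μ *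
          Real.sqrt (∑ i, ∑ j, if i ≠ j then rowNorm W i ^ 2 * rowNorm W j ^ 2 else 0) := by
  -- mean of u is 0
  have hmean_u : ∀ i, (∫ ω, u ω i) = 0 := by
    intro i
    have : (fun ω => u ω i) = fun ω => ∑ k, W i k * x ω k := by
      funext ω; rw [hu]; rfl
    rw [this, integral_finset_sum _ (fun k _ => (hint1 k).const_mul _)]
    simp [integral_const_mul, hmean]
  -- entries of S
  have hrow_sq : ∀ i, rowNorm W i ^ 2 = ∑ k, (W i k) ^ 2 := by
    intro i
    exact Real.sq_sqrt (Finset.sum_nonneg fun k _ => sq_nonneg _)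
  have hSval : ∀ i j, S i j = σ ^ 2 * ∑ k, W i k * W j k := by
    intro i j
    rw [hS i j]
    have heq : (fun ω => (u ω i - ∫ ω', u ω' i) * (u ω j - ∫ ω', u ω' j))
        = fun ω => ∑ k, ∑ l, (W i k * W j l) * (x ω k * x ω l) := by
      funext ω
      rw [hmean_u, hmean_u, sub_zero, sub_zero, hu]
      show (∑ k, W i k * x ω k) * (∑ l, W j l * x ω l) = _
      rw [Finset.sum_mul_sum]
      refine Finset.sum_congr rfl fun k _ => Finset.sum_congr rfl fun l _ => by ring
    rw [heq, integral_finset_sum _ (fun k _ =>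
      integrable_finset_sum _ (fun l _ => (hint2 k l).const_mul _))]
    have : ∀ k, (∫ ω, ∑ l, (W i k * W j l) * (x ω k * x ω l))
        = W i k * W j k * σ ^ 2 := by
      intro k
      rw [integral_finset_sum _ (fun l _ => (hint2 k l).const_mul _)]
      have : ∀ l, (∫ ω, (W i k * W j l) * (x ω k * x ω l))
          = (W i k * W j l) * (σ ^ 2 * if k = l then 1 else 0) := by
        intro l; rw [integral_const_mul, hcov]
      simp only [this, mul_ite, mul_one, mul_zero, Finset.sum_ite_eq, Finset.mem_univ,
        if_true]
    simp only [this]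
    rw [Finset.mul_sum]
    refine Finset.sum_congr rfl fun k _ => by ring
  -- off-diagonal structure
  have hEntry : ∀ i j, (S - Matrix.diagonal αstar) i j
      = if i = j then 0 else σ ^ 2 * ∑ k, W i k * W j k := by
    intro i j
    by_cases h : i = j
    · subst h
      simp [Matrix.sub_apply, Matrix.diagonal_apply_eq, hSval, hαstar, hrow_sq, sq,
        Finset.mul_sum]
    · simp [Matrix.sub_apply, Matrix.diagonal_apply_ne _ h, hSval, h]
  have hrowpos : ∀ i, 0 < rowNorm W i := by
    intro i
    apply Real.sqrt_pos.2
    obtain ⟨k, hk⟩ := Function.ne_iff.1 (hrows i)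
    exact Finset.sum_pos' (fun k _ => sq_nonneg _)
      ⟨k, Finset.mem_univ k, pow_pos (abs_pos.2 hk) 2 |>.trans_eq (by rw [sq_abs])⟩
  -- coherence bound
  have hCS : ∀ i j : Fin m, |∑ k, W i k * W j k| ≤ rowNorm W i * rowNorm W j := by
    intro i j
    rw [abs_le]
    constructor
    · have := Real.sum_mul_le_sqrt_mul_sqrt Finset.univ (fun k => -(W i k)) (fun k => W j k)
      simp only [neg_mul, Finset.sum_neg_distrib, neg_sq] at this
      unfold rowNorm
      linarith
    · exact Real.sum_mul_le_sqrt_mul_sqrt Finset.univ (fun k => W i k) (fun k => W j k)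
  have hbdd : BddAbove {r : ℝ | ∃ i j : Fin m, i ≠ j ∧
      r = |∑ k, W i k * W j k| / (rowNorm W i * rowNorm W j)} := by
    refine ⟨1, fun r hr => ?_⟩
    obtain ⟨i, j, hij, rfl⟩ := hr
    exact div_le_one_of_le₀ (hCS i j) (mul_pos (hrowpos i) (hrowpos j)).le
  have hμ_le : ∀ i j : Fin m, i ≠ j →
      |∑ k, W i k * W j k| ≤ μ * (rowNorm W i * rowNorm W j) := by
    intro i j hij
    have hmem : |∑ k, W i k * W j k| / (rowNorm W i * rowNorm W j) ∈
        {r : ℝ | ∃ i j : Fin m, i ≠ j ∧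
          r = |∑ k, W i k * W j k| / (rowNorm W i * rowNorm W j)} :=
      ⟨i, j, hij, rfl⟩
    have h1 : |∑ k, W i k * W j k| / (rowNorm W i * rowNorm W j) ≤ μ := by
      rw [hμ]; exact le_csSup hbdd hmem
    have hpos : 0 < rowNorm W i * rowNorm W j := mul_pos (hrowpos i) (hrowpos j)
    calc |∑ k, W i k * W j k|
        = |∑ k, W i k * W j k| / (rowNorm W i * rowNorm W j) * (rowNorm W i * rowNorm W j) := by
          rw [div_mul_cancel₀ _ hpos.ne']
      _ ≤ μ * (rowNorm W i * rowNorm W j) := by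
          exact mul_le_mul_of_nonneg_right h1 hpos.le
  constructor
  · -- minimality
    intro α
    unfold frobNorm
    apply Real.sqrt_le_sqrt
    refine Finset.sum_le_sum fun i _ => Finset.sum_le_sum fun j _ => ?_
    by_cases h : i = j
    · rw [hEntry i j, if_pos h]
      simpa using sq_nonneg ((S - Matrix.diagonal α) i j)
    · rw [hEntry i j, if_neg h]
      have : (S - Matrix.diagonal α) i j = σ ^ 2 * ∑ k, W i k * W j k := by
        simp [Matrix.sub_apply, Matrix.diagonal_apply_ne _ h, hSval]
      rw [this]
  · -- error bound
    by_cases hm : ∃ i j : Fin m, i ≠ j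
    · obtain ⟨i₀, j₀, hij₀⟩ := hm
      have hμnn : 0 ≤ μ := by
        have hmem : |∑ k, W i₀ k * W j₀ k| / (rowNorm W i₀ * rowNorm W j₀) ∈
            {r : ℝ | ∃ i j : Fin m, i ≠ j ∧
              r = |∑ k, W i k * W j k| / (rowNorm W i * rowNorm W j)} :=
          ⟨i₀, j₀, hij₀, rfl⟩
        have h1 := le_csSup hbdd hmem
        rw [← hμ] at h1
        have h2 : (0:ℝ) ≤ |∑ k, W i₀ k * W j₀ k| / (rowNorm W i₀ * rowNorm W j₀) :=
          div_nonneg (abs_nonneg _) (mul_pos (hrowpos i₀) (hrowpos j₀)).le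
        exact h2.trans h1
      unfold frobNorm
      have hsum : ∑ i, ∑ j, ((S - Matrix.diagonal αstar) i j) ^ 2
          ≤ (σ ^ 2 * μ) ^ 2 *
            ∑ i, ∑ j, if i ≠ j then rowNorm W i ^ 2 * rowNorm W j ^ 2 else 0 := by
        simp only [Finset.mul_sum]
        refine Finset.sum_le_sum fun i _ => Finset.sum_le_sum fun j _ => ?_
        rw [hEntry i j]
        by_cases h : i = j
        · simp [h]
        · rw [if_neg h, if_pos h]
          have h1 : |σ ^ 2 * ∑ k, W i k * W j k|
              ≤ σ ^ 2 * μ * (rowNorm W i * rowNorm W j) := by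
            rw [abs_mul, abs_of_nonneg (by positivity : (0:ℝ) ≤ σ ^ 2)]
            calc σ ^ 2 * |∑ k, W i k * W j k|
                ≤ σ ^ 2 * (μ * (rowNorm W i * rowNorm W j)) :=
                  mul_le_mul_of_nonneg_left (hμ_le i j h) (by positivity)
              _ = σ ^ 2 * μ * (rowNorm W i * rowNorm W j) := by ring
          have h2 := sq_le_sq' (neg_le_of_abs_le h1) (le_of_abs_le h1)
          calc (σ ^ 2 * ∑ k, W i k * W j k) ^ 2
              ≤ (σ ^ 2 * μ * (rowNorm W i * rowNorm W j)) ^ 2 := h2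
            _ = (σ ^ 2 * μ) ^ 2 * (rowNorm W i ^ 2 * rowNorm W j ^ 2) := by ring
      calc Real.sqrt (∑ i, ∑ j, ((S - Matrix.diagonal αstar) i j) ^ 2)
          ≤ Real.sqrt ((σ ^ 2 * μ) ^ 2 *
              ∑ i, ∑ j, if i ≠ j then rowNorm W i ^ 2 * rowNorm W j ^ 2 else 0) :=
            Real.sqrt_le_sqrt hsum
        _ = σ ^ 2 * μ * Real.sqrt
              (∑ i, ∑ j, if i ≠ j then rowNorm W i ^ 2 * rowNorm W j ^ 2 else 0) := by
            rw [Real.sqrt_mul (sq_nonneg _), Real.sqrt_sq (by positivity)]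
    · -- no pair i ≠ j
      push_neg at hm
      have h0 : ∑ i, ∑ j, ((S - Matrix.diagonal αstar) i j) ^ 2 = 0 := by
        refine Finset.sum_eq_zero fun i _ => Finset.sum_eq_zero fun j _ => ?_
        rw [hEntry i j, if_pos (hm i j)]
        simp
      have h0' : (∑ i, ∑ j, if i ≠ j then rowNorm W i ^ 2 * rowNorm W j ^ 2 else 0) = 0 := by
        refine Finset.sum_eq_zero fun i _ => Finset.sum_eq_zero fun j _ => ?_
        rw [if_neg (by simp [hm i j])]
      unfold frobNorm
      rw [h0, h0']
      simp
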